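/- arXiv:2012.00134 — 2 statements merged into one kernel-verified Lean document; each statement's English description precedes it below -/
import Mathlib

section
/- Let K : H → H be adjointable, let (T_ω)_{ω∈Ω} be an integral K-operator frame for H whose best (optimal) lower and upper frame bounds are A and B, and let Q : H → H be an adjointable invertible operator with adjointable inverse satisfying Q⁻¹ K* = K* Q⁻¹. Then the best lower bound C and best upper bound D of the integral K-operator frame (T_ω ∘ Q)_{ω∈Ω} satisfy A·‖Q⁻¹‖⁻² ≤ C ≤ A·‖Q‖² and B·‖Q⁻¹‖⁻² ≤ D ≤ B·‖Q‖². -/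
open MeasureTheory

/-- The Hilbert C⋆-module class as it stood in the older Mathlib (right `A`-action via `Aᵐᵒᵖ`,
`⟪x, y <• a⟫ = ⟪x, y⟫ * a`); Mathlib's `CStarModule` has since changed convention. -/
class CStarModuleRightAct (A E : Type*) [NonUnitalSemiring A] [StarRing A]
    [Module ℂ A] [AddCommGroup E] [Module ℂ E] [PartialOrder A] [SMul Aᵐᵒᵖ E] [Norm A] [Norm E]
    extends Inner A E where
  inner_add_right {x} {y} {z} : inner x (y + z) = inner x y + inner x z
  inner_self_nonneg {x} : 0 ≤ inner x x
  inner_self {x} : inner x x = 0 ↔ x = 0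
  inner_op_smul_right {a : A} {x y : E} : inner x (MulOpposite.op a • y) = inner x y * a
  inner_smul_right_complex {z : ℂ} {x} {y} : inner x (z • y) = z • inner x y
  star_inner x y : star (inner x y) = inner y x
  norm_eq_sqrt_norm_inner_self x : ‖x‖ = Real.sqrt ‖inner x x‖

variable {A : Type*} [CStarAlgebra A] [PartialOrder A] [StarOrderedRing A]
variable {H : Type*} [NormedAddCommGroup H] [NormedSpace ℂ H] [SMul Aᵐᵒᵖ H] [CStarModuleRightAct A H]
variable {Ω : Type*} [MeasurableSpace Ω]

local notation "⟪" x ", " y "⟫" => inner (𝕜 := A) x y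

/-- `S` is an adjoint of `T` on the Hilbert `A`-module `H`:
`⟪T x, y⟫ = ⟪x, S y⟫` for all `x y`. -/
def IsAdjointOp (T S : H →L[ℂ] H) : Prop :=
  ∀ x y : H, ⟪T x, y⟫ = ⟪x, S y⟫

/-- `(T ω)` is an integral `K`-operator frame with bounds `a`, `b`, where `Ks`
denotes the adjoint `K*` of `K`. -/
def IsIntegralKOpFrameWith (μ : Measure Ω) (Ks : H →L[ℂ] H)
    (T : Ω → H →L[ℂ] H) (a b : ℝ) : Prop :=
  0 < a ∧ 0 < b ∧ ∀ x : H,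
    Integrable (fun ω => ⟪T ω x, T ω x⟫) μ ∧
    a • ⟪Ks x, Ks x⟫ ≤ ∫ ω, ⟪T ω x, T ω x⟫ ∂μ ∧
    ∫ ω, ⟪T ω x, T ω x⟫ ∂μ ≤ b • ⟪x, x⟫

/-- `(T ω)` is an integral operator frame with bounds `a`, `b`. -/
def IsIntegralOpFrameWith (μ : Measure Ω) (T : Ω → H →L[ℂ] H) (a b : ℝ) : Prop :=
  0 < a ∧ 0 < b ∧ ∀ x : H,
    Integrable (fun ω => ⟪T ω x, T ω x⟫) μ ∧
    a • ⟪x, x⟫ ≤ ∫ ω, ⟪T ω x, T ω x⟫ ∂μ ∧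
    ∫ ω, ⟪T ω x, T ω x⟫ ∂μ ≤ b • ⟪x, x⟫

/-!
For adjointable `Q` one has `⟪Q x, Q x⟫ ≤ ‖Q‖² ⟪x, x⟫`. Adjointability makes `Q` commute with the
right `A`-action, and for `e = (⟪x, x⟫ + ε)^(-1/2)` the vector `x • e` has norm at most `1`, so
`e ⟪Q x, Q x⟫ e = ⟪Q (x • e), Q (x • e)⟫ ≤ ‖Q‖²`; conjugating back by `e⁻¹` and letting `ε → 0`
gives the bound. Applied to `Q` and `Q⁻¹`, and since `Q` commutes with `K*` along with `Q⁻¹`, it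
turns every lower bound `c` of one frame into the lower bound `c / ‖Q⁻¹‖²`, resp. `c / ‖Q‖²`, of
the other, and every upper bound `c` into `c ‖Q‖²`, resp. `c ‖Q⁻¹‖²`; the four inequalities follow
by taking suprema and infima.
-/

namespace CStarModuleRightAct

lemma norm_sq_eq_norm_inner_self (x : H) : ‖x‖ ^ 2 = ‖⟪x, x⟫‖ := by
  rw [norm_eq_sqrt_norm_inner_self (A := A) x, Real.sq_sqrt (norm_nonneg _)]

lemma inner_self_le_norm_sq_smul_one (x : H) : ⟪x, x⟫ ≤ ‖x‖ ^ 2 • (1 : A) := by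
  rw [norm_sq_eq_norm_inner_self (A := A), ← Algebra.algebraMap_eq_smul_one]
  exact IsSelfAdjoint.le_algebraMap_norm_self (.of_nonneg (inner_self_nonneg (A := A)))

lemma norm_le_one_of_inner_self_le_one [Nontrivial A] {x : H} (hx : ⟪x, x⟫ ≤ 1) : ‖x‖ ≤ 1 := by
  have : ‖⟪x, x⟫‖ ≤ 1 :=
    (CStarAlgebra.norm_le_norm_of_nonneg_of_le inner_self_nonneg hx).trans_eq norm_one
  rw [← norm_sq_eq_norm_inner_self] at this
  exact (sq_le_one_iff₀ (norm_nonneg x)).1 this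

protected lemma inner_add_left (x y z : H) : ⟪x + y, z⟫ = ⟪x, z⟫ + ⟪y, z⟫ := by
  rw [← star_inner z, inner_add_right, star_add, star_inner, star_inner]

protected lemma inner_sub_left (x y z : H) : ⟪x - y, z⟫ = ⟪x, z⟫ - ⟪y, z⟫ :=
  (AddMonoidHom.mk' (⟪·, z⟫) fun x y => CStarModuleRightAct.inner_add_left x y z).map_sub x y

lemma inner_op_smul_left (e : A) (x y : H) : ⟪MulOpposite.op e • x, y⟫ = star e * ⟪x, y⟫ := by
  rw [← star_inner y, inner_op_smul_right, star_mul, star_inner]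

lemma inner_op_smul_self (e : A) (x : H) :
    ⟪MulOpposite.op e • x, MulOpposite.op e • x⟫ = star e * ⟪x, x⟫ * e := by
  rw [inner_op_smul_left, inner_op_smul_right, mul_assoc]

lemma ext_inner_left {x x' : H} (h : ∀ y, ⟪x, y⟫ = ⟪x', y⟫) : x = x' := by
  rw [← sub_eq_zero, ← inner_self (A := A), CStarModuleRightAct.inner_sub_left, h, sub_self]

end CStarModuleRightAct

open CFC Ring in
theorem le_smul_of_forall_star_mul_mul_le_one {a p : A} (ha : 0 ≤ a) (k : ℝ)
    (h : ∀ e : A, star e * a * e ≤ 1 → star e * p * e ≤ k • 1) : p ≤ k • a := by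
  have hbound : ∀ ε : ℝ, 0 < ε → p ≤ k • (a + algebraMap ℝ A ε) := by
    intro ε hε
    set b := a + algebraMap ℝ A ε
    have hε' : IsStrictlyPositive (algebraMap ℝ A ε) := isStrictlyPositive_algebraMap hε
    have hb : IsStrictlyPositive b := .nonneg_add ha hε'
    have hsqrt : star (sqrt b⁻¹ʳ) = sqrt b⁻¹ʳ := (sqrt_nonneg _).isSelfAdjoint.star_eq
    have hle : star (sqrt b⁻¹ʳ) * a * sqrt b⁻¹ʳ ≤ 1 := by
      rw [hsqrt, ← conjSqrt_apply, ← conjSqrt_ringInverse_self b]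
      exact conjSqrt_monotone (le_add_of_nonneg_right hε'.nonneg)
    have hconj := h _ hle
    rw [hsqrt, ← conjSqrt_apply] at hconj
    calc p = conjSqrt b (conjSqrt b⁻¹ʳ p) := (conjSqrt_conjSqrt_ringInverse b p).symm
      _ ≤ conjSqrt b (k • 1) := conjSqrt_monotone hconj
      _ = k • b := by rw [map_smul, conjSqrt_one b]
  have hcont : Continuous fun ε : ℝ => k • (a + algebraMap ℝ A ε) := by fun_prop
  have hlim :=
    tendsto_nhdsWithin_of_tendsto_nhds (s := Set.Ioi 0) (hcont.tendsto' 0 (k • a) (by simp))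
  exact ge_of_tendsto hlim (eventually_nhdsWithin_of_forall hbound)

lemma IsAdjointOp.map_op_smul {Q Qs : H →L[ℂ] H} (hQ : IsAdjointOp (A := A) Q Qs) (e : A) (x : H) :
    Q (MulOpposite.op e • x) = MulOpposite.op e • Q x :=
  CStarModuleRightAct.ext_inner_left (A := A) fun y => by
    rw [hQ, CStarModuleRightAct.inner_op_smul_left, CStarModuleRightAct.inner_op_smul_left, hQ]

theorem IsAdjointOp.inner_map_self_le {Q Qs : H →L[ℂ] H} (hQ : IsAdjointOp (A := A) Q Qs)
    (x : H) : ⟪Q x, Q x⟫ ≤ ‖Q‖ ^ 2 • ⟪x, x⟫ := by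
  nontriviality A
  refine le_smul_of_forall_star_mul_mul_le_one CStarModuleRightAct.inner_self_nonneg _
    fun e he => ?_
  rw [← CStarModuleRightAct.inner_op_smul_self] at he
  have hy := CStarModuleRightAct.norm_le_one_of_inner_self_le_one he
  calc star e * ⟪Q x, Q x⟫ * e = ⟪Q (MulOpposite.op e • x), Q (MulOpposite.op e • x)⟫ := by
        rw [hQ.map_op_smul, CStarModuleRightAct.inner_op_smul_self]
    _ ≤ ‖Q (MulOpposite.op e • x)‖ ^ 2 • (1 : A) :=
        CStarModuleRightAct.inner_self_le_norm_sq_smul_one _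
    _ ≤ ‖Q‖ ^ 2 • (1 : A) := by
        gcongr
        simpa using Q.le_opNorm_of_le hy

theorem Real.sSup_le_sSup_mul_of_forall_div_mem {S S' : Set ℝ} {r s : ℝ} (hr : 0 < r)
    (hs : 0 < s) (hS' : ∀ c ∈ S', 0 ≤ c) (hSS' : ∀ c ∈ S, c / r ∈ S')
    (hS'S : ∀ c ∈ S', c / s ∈ S) : sSup S ≤ sSup S' * r := by
  have hnonneg : 0 ≤ sSup S' * r := mul_nonneg (Real.sSup_nonneg hS') hr.le
  by_cases hbdd : BddAbove S'
  · rcases S.eq_empty_or_nonempty with rfl | hne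
    · rwa [Real.sSup_empty]
    · exact csSup_le hne fun c hc => (div_le_iff₀ hr).1 (le_csSup hbdd (hSS' c hc))
  · -- `sSup` of an unbounded set is the junk value `0`, and `S` is unbounded along with `S'`
    have hS : ¬BddAbove S := fun ⟨M, hM⟩ =>
      hbdd ⟨M * s, fun c hc => (div_le_iff₀ hs).1 (hM (hS'S c hc))⟩
    rwa [Real.sSup_of_not_bddAbove hS]

theorem Real.sInf_le_sInf_mul_of_forall_mul_mem {S S' : Set ℝ} {r s : ℝ} (hr : 0 < r)
    (hS' : ∀ c ∈ S', 0 ≤ c) (hSS' : ∀ c ∈ S, c * r ∈ S') (hS'S : ∀ c ∈ S', c * s ∈ S) :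
    sInf S' ≤ sInf S * r := by
  rcases S.eq_empty_or_nonempty with rfl | hne
  · rw [Set.eq_empty_of_forall_notMem fun c hc => hS'S c hc]
    simp
  · refine (div_le_iff₀ hr).1 (le_csInf hne fun c hc => ?_)
    exact (div_le_iff₀ hr).2 (csInf_le ⟨0, hS'⟩ (hSS' c hc))

theorem Real.sSup_setOf_pos_and (p : Prop) : sSup {c : ℝ | 0 < c ∧ p} = 0 := by
  by_cases hp : p
  · rw [show {c : ℝ | 0 < c ∧ p} = Set.Ioi 0 by ext; simp [hp]]
    exact Real.sSup_of_not_bddAbove (not_bddAbove_Ioi 0)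
  · simp [hp]

theorem Real.sInf_setOf_pos_and (p : Prop) : sInf {c : ℝ | 0 < c ∧ p} = 0 := by
  by_cases hp : p
  · rw [show {c : ℝ | 0 < c ∧ p} = Set.Ioi 0 by ext; simp [hp]]
    exact csInf_Ioi
  · simp [hp]

def frameLowerBounds (Ks : H →L[ℂ] H) (F : H → A) : Set ℝ :=
  {c | 0 < c ∧ ∀ x, c • ⟪Ks x, Ks x⟫ ≤ F x}

def frameUpperBounds (F : H → A) : Set ℝ :=
  {c | 0 < c ∧ ∀ x, F x ≤ c • ⟪x, x⟫}

lemma sSup_frameLowerBounds_of_subsingleton [Subsingleton H] (Ks : H →L[ℂ] H) (F : H → A) :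
    sSup (frameLowerBounds Ks F) = 0 := by
  have h0 (x : H) : ⟪x, x⟫ = 0 := CStarModuleRightAct.inner_self.2 (Subsingleton.elim x 0)
  simpa [frameLowerBounds, h0] using Real.sSup_setOf_pos_and (∀ x, 0 ≤ F x)

lemma sInf_frameUpperBounds_of_subsingleton [Subsingleton H] (F : H → A) :
    sInf (frameUpperBounds F) = 0 := by
  have h0 (x : H) : ⟪x, x⟫ = 0 := CStarModuleRightAct.inner_self.2 (Subsingleton.elim x 0)
  simpa [frameUpperBounds, h0] using Real.sInf_setOf_pos_and (∀ x, F x ≤ 0)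

lemma div_mem_frameLowerBounds_comp {Ks P R Rs : H →L[ℂ] H} {F : H → A}
    (hR : IsAdjointOp (A := A) R Rs) (hRP : R.comp P = .id ℂ H) (hcomm : P.comp Ks = Ks.comp P)
    (hR0 : 0 < ‖R‖) {c : ℝ} (hc : c ∈ frameLowerBounds Ks F) :
    c / ‖R‖ ^ 2 ∈ frameLowerBounds Ks (F ∘ P) := by
  have hcR : 0 < c / ‖R‖ ^ 2 := div_pos hc.1 (by positivity)
  refine ⟨hcR, fun x => ?_⟩
  calc (c / ‖R‖ ^ 2) • ⟪Ks x, Ks x⟫ = (c / ‖R‖ ^ 2) • ⟪R (P (Ks x)), R (P (Ks x))⟫ := by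
        rw [← ContinuousLinearMap.comp_apply R P, hRP, ContinuousLinearMap.id_apply]
    _ ≤ (c / ‖R‖ ^ 2) • (‖R‖ ^ 2 • ⟪P (Ks x), P (Ks x)⟫) :=
        smul_le_smul_of_nonneg_left (hR.inner_map_self_le _) hcR.le
    _ = c • ⟪Ks (P x), Ks (P x)⟫ := by
        rw [smul_smul, div_mul_cancel₀ _ (by positivity), ← ContinuousLinearMap.comp_apply P Ks,
          hcomm, ContinuousLinearMap.comp_apply]
    _ ≤ F (P x) := hc.2 (P x)

lemma mul_mem_frameUpperBounds_comp {P Ps : H →L[ℂ] H} {F : H → A}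
    (hP : IsAdjointOp (A := A) P Ps) (hP0 : 0 < ‖P‖) {c : ℝ} (hc : c ∈ frameUpperBounds F) :
    c * ‖P‖ ^ 2 ∈ frameUpperBounds (F ∘ P) := by
  refine ⟨mul_pos hc.1 (by positivity), fun x => ?_⟩
  calc F (P x) ≤ c • ⟪P x, P x⟫ := hc.2 (P x)
    _ ≤ c • (‖P‖ ^ 2 • ⟪x, x⟫) := smul_le_smul_of_nonneg_left (hP.inner_map_self_le x) hc.1.le
    _ = (c * ‖P‖ ^ 2) • ⟪x, x⟫ := smul_smul _ _ _

theorem frameBounds_comp_invertible {Ks Q Qs Qinv Qinvs : H →L[ℂ] H}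
    (hQ : IsAdjointOp (A := A) Q Qs) (hQinv : IsAdjointOp (A := A) Qinv Qinvs)
    (hleft : Qinv.comp Q = .id ℂ H) (hright : Q.comp Qinv = .id ℂ H)
    (hcomm : Qinv.comp Ks = Ks.comp Qinv) (F : H → A) :
    (sSup (frameLowerBounds Ks F) * (‖Qinv‖ ^ 2)⁻¹ ≤ sSup (frameLowerBounds Ks (F ∘ Q)) ∧
        sSup (frameLowerBounds Ks (F ∘ Q)) ≤ sSup (frameLowerBounds Ks F) * ‖Q‖ ^ 2) ∧
      (sInf (frameUpperBounds F) * (‖Qinv‖ ^ 2)⁻¹ ≤ sInf (frameUpperBounds (F ∘ Q)) ∧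
        sInf (frameUpperBounds (F ∘ Q)) ≤ sInf (frameUpperBounds F) * ‖Q‖ ^ 2) := by
  rcases subsingleton_or_nontrivial H with _ | _
  · simp [sSup_frameLowerBounds_of_subsingleton, sInf_frameUpperBounds_of_subsingleton]
  have hid : ContinuousLinearMap.id ℂ H ≠ 0 := by
    rw [← ContinuousLinearMap.one_def]; exact one_ne_zero
  have hQ0 : 0 < ‖Q‖ :=
    norm_pos_iff.2 fun h => hid (by rw [← hleft, h, ContinuousLinearMap.comp_zero])
  have hQinv0 : 0 < ‖Qinv‖ :=
    norm_pos_iff.2 fun h => hid (by rw [← hleft, h, ContinuousLinearMap.zero_comp])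
  have hcomm' : Q.comp Ks = Ks.comp Q :=
    (Commute.units_inv_left_iff (u := ⟨Q, Qinv, hright, hleft⟩)).1 hcomm
  have hF : (F ∘ Q) ∘ Qinv = F := by
    rw [Function.comp_assoc, ← ContinuousLinearMap.coe_comp, hright]; rfl
  have hL : ∀ c ∈ frameLowerBounds Ks F, c / ‖Qinv‖ ^ 2 ∈ frameLowerBounds Ks (F ∘ Q) :=
    fun c => div_mem_frameLowerBounds_comp hQinv hleft hcomm' hQinv0
  have hL' : ∀ c ∈ frameLowerBounds Ks (F ∘ Q), c / ‖Q‖ ^ 2 ∈ frameLowerBounds Ks F :=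
    fun c hc => hF ▸ div_mem_frameLowerBounds_comp hQ hright hcomm hQ0 hc
  have hU : ∀ c ∈ frameUpperBounds F, c * ‖Q‖ ^ 2 ∈ frameUpperBounds (F ∘ Q) :=
    fun c => mul_mem_frameUpperBounds_comp hQ hQ0
  have hU' : ∀ c ∈ frameUpperBounds (F ∘ Q), c * ‖Qinv‖ ^ 2 ∈ frameUpperBounds F :=
    fun c hc => hF ▸ mul_mem_frameUpperBounds_comp hQinv hQinv0 hc
  refine ⟨⟨?_, Real.sSup_le_sSup_mul_of_forall_div_mem (by positivity) (by positivity)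
    (fun c hc => hc.1.le) hL' hL⟩, ⟨?_, Real.sInf_le_sInf_mul_of_forall_mul_mem (by positivity)
    (fun c hc => hc.1.le) hU hU'⟩⟩
  · rw [mul_inv_le_iff₀ (by positivity)]
    exact Real.sSup_le_sSup_mul_of_forall_div_mem (by positivity) (by positivity)
      (fun c hc => hc.1.le) hL hL'
  · rw [mul_inv_le_iff₀ (by positivity)]
    exact Real.sInf_le_sInf_mul_of_forall_mul_mem (by positivity) (fun c hc => hc.1.le) hU' hU

theorem bestBounds_integralKOpFrame_comp_invertible_general
    (μ : Measure Ω) (Ks Q Qs Qinv Qinvs : H →L[ℂ] H)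
    (hQ : IsAdjointOp (A := A) Q Qs)
    (hQinv : IsAdjointOp (A := A) Qinv Qinvs)
    (hleft : Qinv.comp Q = ContinuousLinearMap.id ℂ H)
    (hright : Q.comp Qinv = ContinuousLinearMap.id ℂ H)
    (hcomm : Qinv.comp Ks = Ks.comp Qinv)
    (T : Ω → H →L[ℂ] H)
    (a b C D : ℝ)
    (ha : a = sSup {c : ℝ | 0 < c ∧
      ∀ x : H, c • ⟪Ks x, Ks x⟫ ≤ ∫ ω, ⟪T ω x, T ω x⟫ ∂μ})
    (hb : b = sInf {c : ℝ | 0 < c ∧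
      ∀ x : H, ∫ ω, ⟪T ω x, T ω x⟫ ∂μ ≤ c • ⟪x, x⟫})
    (hC : C = sSup {c : ℝ | 0 < c ∧
      ∀ x : H, c • ⟪Ks x, Ks x⟫ ≤ ∫ ω, ⟪T ω (Q x), T ω (Q x)⟫ ∂μ})
    (hD : D = sInf {c : ℝ | 0 < c ∧
      ∀ x : H, ∫ ω, ⟪T ω (Q x), T ω (Q x)⟫ ∂μ ≤ c • ⟪x, x⟫}) :
    (a * (‖Qinv‖ ^ 2)⁻¹ ≤ C ∧ C ≤ a * ‖Q‖ ^ 2) ∧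
      (b * (‖Qinv‖ ^ 2)⁻¹ ≤ D ∧ D ≤ b * ‖Q‖ ^ 2) := by
  subst ha hb hC hD
  exact frameBounds_comp_invertible hQ hQinv hleft hright hcomm
    fun x => ∫ ω, ⟪T ω x, T ω x⟫ ∂μ

/-- if `(T ω)` is an integral `K`-operator frame with best bounds `a`, `b`
and `Q` is adjointable, invertible with adjointable inverse, and `Q⁻¹ K* = K* Q⁻¹`, then
the best bounds `C`, `D` of the integral `K`-operator frame `(T ω ∘ Q)` satisfy
`a * ‖Q⁻¹‖⁻² ≤ C ≤ a * ‖Q‖²` and `b * ‖Q⁻¹‖⁻² ≤ D ≤ b * ‖Q‖²`. -/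
theorem bestBounds_integralKOpFrame_comp_invertible
    (μ : Measure Ω) (K Ks Q Qs Qinv Qinvs : H →L[ℂ] H)
    (hK : IsAdjointOp (A := A) K Ks) (hQ : IsAdjointOp (A := A) Q Qs)
    (hQinv : IsAdjointOp (A := A) Qinv Qinvs)
    (hleft : Qinv.comp Q = ContinuousLinearMap.id ℂ H)
    (hright : Q.comp Qinv = ContinuousLinearMap.id ℂ H)
    (hcomm : Qinv.comp Ks = Ks.comp Qinv)
    (T : Ω → H →L[ℂ] H)
    (hframe : ∃ a b : ℝ, IsIntegralKOpFrameWith (A := A) μ Ks T a b)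
    (a b C D : ℝ)
    (ha : a = sSup {c : ℝ | 0 < c ∧
      ∀ x : H, c • ⟪Ks x, Ks x⟫ ≤ ∫ ω, ⟪T ω x, T ω x⟫ ∂μ})
    (hb : b = sInf {c : ℝ | 0 < c ∧
      ∀ x : H, ∫ ω, ⟪T ω x, T ω x⟫ ∂μ ≤ c • ⟪x, x⟫})
    (hC : C = sSup {c : ℝ | 0 < c ∧
      ∀ x : H, c • ⟪Ks x, Ks x⟫ ≤ ∫ ω, ⟪T ω (Q x), T ω (Q x)⟫ ∂μ})
    (hD : D = sInf {c : ℝ | 0 < c ∧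
      ∀ x : H, ∫ ω, ⟪T ω (Q x), T ω (Q x)⟫ ∂μ ≤ c • ⟪x, x⟫}) :
    (a * (‖Qinv‖ ^ 2)⁻¹ ≤ C ∧ C ≤ a * ‖Q‖ ^ 2) ∧
      (b * (‖Qinv‖ ^ 2)⁻¹ ≤ D ∧ D ≤ b * ‖Q‖ ^ 2) :=
  bestBounds_integralKOpFrame_comp_invertible_general μ Ks Q Qs Qinv Qinvs hQ hQinv hleft hright
    hcomm T a b C D ha hb hC hD
end

section
/- Let (T_ω)_{ω∈Ω} and (Γ_ω)_{ω∈Ω} be families of adjointable operators on H and let (a_ω)_{ω∈Ω}, (b_ω)_{ω∈Ω} be positively confined families of real numbers (0 < inf_ω a_ω ≤ sup_ω a_ω < ∞ and 0 < inf_ω b_ω ≤ sup_ω b_ω < ∞). Suppose there exist constants α, β with 0 ≤ α < 1/2 and 0 ≤ β < 1/2 such that for all x ∈ H, ∫_Ω ⟨a_ω T_ω x − b_ω Γ_ω x, a_ω T_ω x − b_ω Γ_ω x⟩ dμ(ω) ≤ α·∫_Ω ⟨a_ω T_ω x, a_ω T_ω x⟩ dμ(ω) + β·∫_Ω ⟨b_ω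 Γ_ω x, b_ω Γ_ω x⟩ dμ(ω). Then for all x ∈ H, ∫_Ω ⟨Γ_ω x, Γ_ω x⟩ dμ(ω) ≤ (2(1+α)·(sup_ω a_ω)² / ((1−2β)·(inf_ω b_ω)²)) · ∫_Ω ⟨T_ω x, T_ω x⟩ dμ(ω). -/
open MeasureTheory

variable {A : Type*} [CStarAlgebra A] [PartialOrder A] [StarOrderedRing A]
variable {H : Type*} [NormedAddCommGroup H] [NormedSpace ℂ H] [SMul A H] [CStarModule A H]
variable {Ω : Type*} [MeasurableSpace Ω]

local notation "⟪" x ", " y "⟫" => inner (𝕜 := A) x y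

/-! The perturbation hypothesis together with `⟪v, v⟫ ≤ 2 ⟪u - v, u - v⟫ + 2 ⟪u, u⟫` for
`u = c • T x`, `v = d • G x` gives `(1 - 2β) ∫ ⟪v, v⟫ ≤ 2 (1 + α) ∫ ⟪u, u⟫`; the bounds
`c ≤ sup c` and `inf d ≤ d` then replace `u` by `T x` and `v` by `G x`. -/

lemma Real.bddBelow_range_of_iInf_ne_zero {ι : Sort*} {f : ι → ℝ} (h : ⨅ i, f i ≠ 0) :
    BddBelow (Set.range f) := by
  by_contra hf
  exact h (Real.iInf_of_not_bddBelow hf)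

lemma inner_self_le_two_smul_add_two_smul (u v : H) :
    ⟪v, v⟫ ≤ (2 : ℝ) • ⟪u - v, u - v⟫ + (2 : ℝ) • ⟪u, u⟫ := by
  have key : (2 : ℝ) • ⟪u - v, u - v⟫ + (2 : ℝ) • ⟪u, u⟫ - ⟪v, v⟫
      = ⟪(2 : ℝ) • u - v, (2 : ℝ) • u - v⟫ := by
    simp only [CStarModule.inner_sub_left, CStarModule.inner_sub_right,
      CStarModule.inner_smul_left_real, CStarModule.inner_smul_right_real, smul_sub, smul_smul]
    module
  exact sub_nonneg.mp (key ▸ CStarModule.inner_self_nonneg)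

section Integral

variable {μ : Measure Ω}

lemma smul_integral_inner_self_le_of_integral_inner_sub_le {u v : Ω → H} {α β : ℝ}
    (hu : Integrable (fun ω => ⟪u ω, u ω⟫) μ) (hv : Integrable (fun ω => ⟪v ω, v ω⟫) μ)
    (huv : Integrable (fun ω => ⟪u ω - v ω, u ω - v ω⟫) μ)
    (hper : ∫ ω, ⟪u ω - v ω, u ω - v ω⟫ ∂μ ≤
      α • ∫ ω, ⟪u ω, u ω⟫ ∂μ + β • ∫ ω, ⟪v ω, v ω⟫ ∂μ) :
    (1 - 2 * β) • ∫ ω, ⟪v ω, v ω⟫ ∂μ ≤ (2 * (1 + α)) • ∫ ω, ⟪u ω, u ω⟫ ∂μ := by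
  set IU := ∫ ω, ⟪u ω, u ω⟫ ∂μ
  set IV := ∫ ω, ⟪v ω, v ω⟫ ∂μ
  set ID := ∫ ω, ⟪u ω - v ω, u ω - v ω⟫ ∂μ
  have hIV : IV ≤ (2 : ℝ) • ID + (2 : ℝ) • IU := by
    have h2uv : Integrable (fun ω => (2 : ℝ) • ⟪u ω - v ω, u ω - v ω⟫) μ := huv.smul 2
    have h2u : Integrable (fun ω => (2 : ℝ) • ⟪u ω, u ω⟫) μ := hu.smul 2
    rw [← integral_smul, ← integral_smul, ← integral_add h2uv h2u]
    exact integral_mono hv (h2uv.add h2u)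
      fun ω => inner_self_le_two_smul_add_two_smul (u ω) (v ω)
  have hsum : IV ≤ (2 : ℝ) • (α • IU + β • IV) + (2 : ℝ) • IU :=
    hIV.trans (add_le_add_left (smul_le_smul_of_nonneg_left hper zero_le_two) _)
  have key : (2 : ℝ) • (α • IU + β • IV) + (2 : ℝ) • IU - IV
      = (2 * (1 + α)) • IU - (1 - 2 * β) • IV := by
    simp only [smul_add, smul_smul]
    module
  exact sub_nonneg.mp (key ▸ sub_nonneg.mpr hsum)

variable {f : Ω → H} {c : Ω → ℝ} {C : ℝ}

lemma integral_inner_smul_self_le (hc : ∀ ω, 0 ≤ c ω ∧ c ω ≤ C)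
    (hf : Integrable (fun ω => ⟪f ω, f ω⟫) μ)
    (hcf : Integrable (fun ω => ⟪c ω • f ω, c ω • f ω⟫) μ) :
    ∫ ω, ⟪c ω • f ω, c ω • f ω⟫ ∂μ ≤ C ^ 2 • ∫ ω, ⟪f ω, f ω⟫ ∂μ := by
  rw [← integral_smul]
  refine integral_mono hcf (hf.smul _) fun ω => ?_
  rw [CStarModule.inner_smul_left_real, CStarModule.inner_smul_right_real, smul_smul, ← sq]
  exact smul_le_smul_of_nonneg_right (pow_le_pow_left₀ (hc ω).1 (hc ω).2 2)
    CStarModule.inner_self_nonneg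

lemma smul_integral_inner_le_integral_inner_smul_self (hc : 0 ≤ C ∧ ∀ ω, C ≤ c ω)
    (hf : Integrable (fun ω => ⟪f ω, f ω⟫) μ)
    (hcf : Integrable (fun ω => ⟪c ω • f ω, c ω • f ω⟫) μ) :
    C ^ 2 • ∫ ω, ⟪f ω, f ω⟫ ∂μ ≤ ∫ ω, ⟪c ω • f ω, c ω • f ω⟫ ∂μ := by
  rw [← integral_smul]
  refine integral_mono (hf.smul _) hcf fun ω => ?_
  rw [CStarModule.inner_smul_left_real, CStarModule.inner_smul_right_real, smul_smul, ← sq]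
  exact smul_le_smul_of_nonneg_right (pow_le_pow_left₀ hc.1 (hc.2 ω) 2)
    CStarModule.inner_self_nonneg

end Integral

theorem integral_inner_le_of_perturbation_general
    (μ : Measure Ω) (T G : Ω → H →L[ℂ] H)
    (c d : Ω → ℝ)
    (hc0 : 0 < ⨅ ω, c ω) (hcbdd : BddAbove (Set.range c))
    (hd0 : 0 < ⨅ ω, d ω)
    (hTint : ∀ x : H, Integrable (fun ω => ⟪T ω x, T ω x⟫) μ)
    (hGint : ∀ x : H, Integrable (fun ω => ⟪G ω x, G ω x⟫) μ)
    (hint1 : ∀ x : H, Integrable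
      (fun ω => ⟪c ω • T ω x - d ω • G ω x, c ω • T ω x - d ω • G ω x⟫) μ)
    (hint2 : ∀ x : H, Integrable (fun ω => ⟪c ω • T ω x, c ω • T ω x⟫) μ)
    (hint3 : ∀ x : H, Integrable (fun ω => ⟪d ω • G ω x, d ω • G ω x⟫) μ)
    (α β : ℝ) (hα0 : 0 ≤ α) (hβ : β < 1 / 2)
    (hper : ∀ x : H,
      ∫ ω, ⟪c ω • T ω x - d ω • G ω x, c ω • T ω x - d ω • G ω x⟫ ∂μ ≤
        α • ∫ ω, ⟪c ω • T ω x, c ω • T ω x⟫ ∂μ +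
          β • ∫ ω, ⟪d ω • G ω x, d ω • G ω x⟫ ∂μ) :
    ∀ x : H,
      ∫ ω, ⟪G ω x, G ω x⟫ ∂μ ≤
        (2 * (1 + α) * (⨆ ω, c ω) ^ 2 / ((1 - 2 * β) * (⨅ ω, d ω) ^ 2)) •
          ∫ ω, ⟪T ω x, T ω x⟫ ∂μ := by
  intro x
  have hc : ∀ ω, 0 ≤ c ω ∧ c ω ≤ ⨆ ω, c ω := fun ω =>
    ⟨hc0.le.trans (ciInf_le (Real.bddBelow_range_of_iInf_ne_zero hc0.ne') ω),
      le_ciSup hcbdd ω⟩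
  have hd : 0 ≤ ⨅ ω, d ω ∧ ∀ ω, ⨅ ω, d ω ≤ d ω :=
    ⟨hd0.le, ciInf_le (Real.bddBelow_range_of_iInf_ne_zero hd0.ne')⟩
  have hβ' : 0 < 1 - 2 * β := by linarith
  rw [div_eq_inv_mul, mul_smul, le_inv_smul_iff_of_pos (mul_pos hβ' (pow_pos hd0 2))]
  calc ((1 - 2 * β) * (⨅ ω, d ω) ^ 2) • ∫ ω, ⟪G ω x, G ω x⟫ ∂μ
      = (1 - 2 * β) • ((⨅ ω, d ω) ^ 2 • ∫ ω, ⟪G ω x, G ω x⟫ ∂μ) := mul_smul _ _ _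
    _ ≤ (1 - 2 * β) • ∫ ω, ⟪d ω • G ω x, d ω • G ω x⟫ ∂μ := by
      gcongr
      exact smul_integral_inner_le_integral_inner_smul_self hd (hGint x) (hint3 x)
    _ ≤ (2 * (1 + α)) • ∫ ω, ⟪c ω • T ω x, c ω • T ω x⟫ ∂μ :=
      smul_integral_inner_self_le_of_integral_inner_sub_le (hint2 x) (hint3 x) (hint1 x) (hper x)
    _ ≤ (2 * (1 + α)) • ((⨆ ω, c ω) ^ 2 • ∫ ω, ⟪T ω x, T ω x⟫ ∂μ) := by
      gcongr
      exact integral_inner_smul_self_le hc (hTint x) (hint2 x)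
    _ = (2 * (1 + α) * (⨆ ω, c ω) ^ 2) • ∫ ω, ⟪T ω x, T ω x⟫ ∂μ := (mul_smul _ _ _).symm

/-- under the perturbation condition with `0 ≤ α, β < 1/2` and positively
confined families `(c ω)`, `(d ω)`, one has
`∫ ⟪G ω x, G ω x⟫ ≤ (2(1+α)(sup c)² / ((1−2β)(inf d)²)) • ∫ ⟪T ω x, T ω x⟫`. -/
theorem integral_inner_le_of_perturbation
    (μ : Measure Ω) (T G : Ω → H →L[ℂ] H)
    (c d : Ω → ℝ)
    (hc0 : 0 < ⨅ ω, c ω) (hcbdd : BddAbove (Set.range c))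
    (hd0 : 0 < ⨅ ω, d ω) (hdbdd : BddAbove (Set.range d))
    (hTint : ∀ x : H, Integrable (fun ω => ⟪T ω x, T ω x⟫) μ)
    (hGint : ∀ x : H, Integrable (fun ω => ⟪G ω x, G ω x⟫) μ)
    (hint1 : ∀ x : H, Integrable
      (fun ω => ⟪c ω • T ω x - d ω • G ω x, c ω • T ω x - d ω • G ω x⟫) μ)
    (hint2 : ∀ x : H, Integrable (fun ω => ⟪c ω • T ω x, c ω • T ω x⟫) μ)
    (hint3 : ∀ x : H, Integrable (fun ω => ⟪d ω • G ω x, d ω • G ω x⟫) μ)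
    (α β : ℝ) (hα0 : 0 ≤ α) (hα : α < 1 / 2) (hβ0 : 0 ≤ β) (hβ : β < 1 / 2)
    (hper : ∀ x : H,
      ∫ ω, ⟪c ω • T ω x - d ω • G ω x, c ω • T ω x - d ω • G ω x⟫ ∂μ ≤
        α • ∫ ω, ⟪c ω • T ω x, c ω • T ω x⟫ ∂μ +
          β • ∫ ω, ⟪d ω • G ω x, d ω • G ω x⟫ ∂μ) :
    ∀ x : H,
      ∫ ω, ⟪G ω x, G ω x⟫ ∂μ ≤
        (2 * (1 + α) * (⨆ ω, c ω) ^ 2 / ((1 - 2 * β) * (⨅ ω, d ω) ^ 2)) •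
          ∫ ω, ⟪T ω x, T ω x⟫ ∂μ :=
  integral_inner_le_of_perturbation_general μ T G c d hc0 hcbdd hd0 hTint hGint hint1 hint2 hint3 α
    β hα0 hβ hper
end
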